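/- arXiv:1202.3406 — 5 statements merged into one kernel-verified Lean document; each statement's English description precedes it below -/
import Mathlib

section
/- If M is a matroid on ground set E whose empty set is not a base, then the collection B(M⁻) = {B \ {e} : B a base of M, e ∈ B} satisfies the base axioms of a matroid on E (in particular the maximality/exchange conditions), so M⁻ is a matroid. -/
/-!
`M⁻` is the truncation of `M`: its independent sets are the independent non-bases of `M`.
Its maximal independent sets are exactly the sets `B \ {e}`, since every independent set
properly containing `B \ {e}` is a base. For augmentation, extend a non-maximal
`I` to a base `B' ⊆ I ∪ B` of `M`: as `I` is not one element short of a base, `B' \ I` has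
at least two elements, so one of them lies in `B \ {e}`. Maximal subsets are inherited from
`M`, removing one new element whenever the maximal independent subset found there is a base.
-/

open Set

namespace Matroid

variable {α : Type*} {M : Matroid α} {B I J X : Set α} {e x : α}

def TruncIndep (M : Matroid α) (I : Set α) : Prop :=
  M.Indep I ∧ ¬ M.IsBase I

lemma TruncIndep.subset (hJ : M.TruncIndep J) (hIJ : I ⊆ J) : M.TruncIndep I :=
  ⟨hJ.1.subset hIJ, fun hI ↦ hJ.2 (hI.eq_of_subset_indep hJ.1 hIJ ▸ hI)⟩

lemma IsBase.maximal_truncIndep_sdiff_singleton (hB : M.IsBase B) (he : e ∈ B) :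
    Maximal M.TruncIndep (B \ {e}) := by
  refine ⟨⟨hB.indep.subset sdiff_subset,
    hB.not_isBase_of_ssubset (sdiff_singleton_ssubset.2 he)⟩, fun Y hY hsub ↦ ?_⟩
  by_contra hYsub
  obtain ⟨y, hyY, hy⟩ := not_subset.1 hYsub
  have hyB : M.IsBase (insert y (B \ {e})) :=
    insert_isBase_of_insert_indep (e := e) (by simp) hy (by simpa [he] using hB)
      (hY.1.subset (insert_subset hyY hsub))
  exact hY.2 (hyB.eq_of_subset_indep hY.1 (insert_subset hyY hsub) ▸ hyB)

lemma maximal_truncIndep_iff :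
    Maximal M.TruncIndep X ↔ ∃ B e, M.IsBase B ∧ e ∈ B ∧ X = B \ {e} := by
  refine ⟨fun hX ↦ ?_, ?_⟩
  · obtain ⟨B, hB, hXB⟩ := hX.1.1.exists_isBase_superset
    obtain ⟨e, heB, heX⟩ := exists_of_ssubset (hXB.ssubset_of_ne (by rintro rfl; exact hX.1.2 hB))
    have hXBe : X ⊆ B \ {e} := subset_sdiff_singleton hXB heX
    exact ⟨B, e, hB, heB, hXBe.antisymm
      (hX.2 (hB.maximal_truncIndep_sdiff_singleton heB).1 hXBe)⟩
  · rintro ⟨B, e, hB, he, rfl⟩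
    exact hB.maximal_truncIndep_sdiff_singleton he

lemma TruncIndep.not_isBase_insert (hI : M.TruncIndep I) (hImax : ¬ Maximal M.TruncIndep I) :
    ¬ M.IsBase (insert x I) := by
  intro hxI
  by_cases hx : x ∈ I
  · exact hI.2 (by rwa [insert_eq_of_mem hx] at hxI)
  · exact hImax (by simpa [hx] using hxI.maximal_truncIndep_sdiff_singleton (mem_insert x I))

lemma TruncIndep.exists_insert_of_not_maximal (hI : M.TruncIndep I)
    (hImax : ¬ Maximal M.TruncIndep I) (hB : M.IsBase B) :
    ∃ x ∈ (B \ {e}) \ I, M.TruncIndep (insert x I) := by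
  obtain ⟨B', hB', hIB', hB'IB⟩ := hI.1.exists_isBase_subset_union_isBase hB
  have hB'e : ¬ B' ⊆ insert e I := by
    intro hsub
    by_cases heB' : e ∈ B'
    · exact hI.not_isBase_insert hImax (hsub.antisymm (insert_subset heB' hIB') ▸ hB')
    · exact hI.2 (hIB'.antisymm ((subset_insert_iff_of_notMem heB').1 hsub) ▸ hB')
  obtain ⟨y, hyB', hy⟩ := not_subset.1 hB'e
  rw [mem_insert_iff, not_or] at hy
  have hyB : y ∈ B := (hB'IB hyB').resolve_left hy.2
  exact ⟨y, ⟨⟨hyB, hy.1⟩, hy.2⟩,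
    hB'.indep.subset (insert_subset hyB' hIB'), hI.not_isBase_insert hImax⟩

lemma existsMaximalSubsetProperty_truncIndep (hX : X ⊆ M.E) :
    ExistsMaximalSubsetProperty M.TruncIndep X := by
  intro I hI hIX
  obtain ⟨J, hIJ, hJ⟩ := M.maximality X hX I hI.1 hIX
  by_cases hJB : M.IsBase J
  · obtain ⟨e, heJ, heI⟩ :=
      exists_of_ssubset (hIJ.ssubset_of_ne (by rintro rfl; exact hI.2 hJB))
    have hJe := hJB.maximal_truncIndep_sdiff_singleton heJ
    exact ⟨J \ {e}, subset_sdiff_singleton hIJ heI, ⟨hJe.1, sdiff_subset.trans hJ.1.2⟩,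
      fun K hK hJK ↦ hJe.2 hK.1 hJK⟩
  · exact ⟨J, hIJ, ⟨⟨hJ.1.1, hJB⟩, hJ.1.2⟩, fun K hK hJK ↦ hJ.2 ⟨hK.1.1, hK.2⟩ hJK⟩

def truncateIndepMatroid (M : Matroid α) (h : ¬ M.IsBase ∅) : IndepMatroid α where
  E := M.E
  Indep := M.TruncIndep
  indep_empty := ⟨M.empty_indep, h⟩
  indep_subset _ _ hJ hIJ := hJ.subset hIJ
  indep_aug I _ hI hImax hBmax := by
    obtain ⟨B, e, hB, -, rfl⟩ := maximal_truncIndep_iff.1 hBmax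
    exact hI.exists_insert_of_not_maximal hImax hB
  indep_maximal _ hX := existsMaximalSubsetProperty_truncIndep hX
  subset_ground _ hI := hI.1.subset_ground

def truncate (M : Matroid α) (h : ¬ M.IsBase ∅) : Matroid α :=
  (M.truncateIndepMatroid h).matroid

lemma truncate_isBase_iff (h : ¬ M.IsBase ∅) :
    (M.truncate h).IsBase X ↔ ∃ B e, M.IsBase B ∧ e ∈ B ∧ X = B \ {e} :=
  isBase_iff_maximal_indep.trans maximal_truncIndep_iff

end Matroid

/-- If `∅` is not a base of `M`, then the collection of sets `B \ {e}` for `B` a base of `M`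
and `e ∈ B` is the set of bases of a matroid `M⁻` on the same ground set. -/
theorem Mminus_isMatroid {α : Type*} (M : Matroid α) (h : ¬ M.IsBase ∅) :
    ∃ N : Matroid α, N.E = M.E ∧
      ∀ X, N.IsBase X ↔ ∃ B e, M.IsBase B ∧ e ∈ B ∧ X = B \ {e} :=
  ⟨M.truncate h, rfl, fun _ ↦ Matroid.truncate_isBase_iff h⟩
end

section
/- Let M be a matroid in which ∅ is not a base and let O be a circuit of M⁻. Then either O is a base of M, or O is a circuit of M that does not include a base of M. Conversely, every base of M, and every circuit of M not including a base of M, is a circuit of M⁻. -/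
/-- A circuit: a minimal dependent set. -/
def Matroid.IsCircuit' {α : Type*} (M : Matroid α) (C : Set α) : Prop :=
  M.Dep C ∧ ∀ ⦃D⦄, M.Dep D → D ⊆ C → D = C

/-!
Independent sets of `M⁻` are the independent sets of `M` that are not bases, so the dependent sets
of `M⁻` are the dependent sets and the bases of `M`. A circuit of `M⁻` is a minimal member of this
family: a minimal base is any base, since bases form an antichain, and a minimal dependent set that
contains no base is a circuit of `M` containing no base.
-/

namespace Matroid

variable {α : Type*} {M Mm : Matroid α} {X O : Set α}

lemma isCircuit'_iff_isCircuit : M.IsCircuit' O ↔ M.IsCircuit O := by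
  rw [isCircuit_def, minimal_subset_iff, IsCircuit']
  exact and_congr_right fun _ ↦ forall₂_congr fun _ _ ↦ imp_congr_right fun _ ↦ eq_comm

lemma minimal_dep_or_isBase_iff :
    Minimal (fun X ↦ M.Dep X ∨ M.IsBase X) O ↔
      M.IsBase O ∨ (M.IsCircuit O ∧ ¬ ∃ B ⊆ O, M.IsBase B) := by
  constructor
  · intro hO
    by_cases hOB : M.IsBase O
    · exact .inl hOB
    have hOdep : M.Dep O := hO.prop.resolve_right hOB
    refine .inr ⟨hO.mono (fun _ ↦ .inl) hOdep, ?_⟩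
    rintro ⟨B, hBO, hB⟩
    exact hOB (hO.eq_of_subset (.inr hB) hBO ▸ hB)
  rintro (hOB | ⟨hOC, hnoB⟩)
  · refine minimal_subset_iff.2 ⟨.inr hOB, fun D hD hDO ↦ ?_⟩
    have hDB : M.IsBase D := hD.resolve_left (hOB.indep.subset hDO).not_dep
    exact (hDB.eq_of_subset_isBase hOB hDO).symm
  · refine minimal_subset_iff.2 ⟨.inl hOC.dep, fun D hD hDO ↦ ?_⟩
    rcases hD with hD | hD
    · exact (hOC.eq_of_subset hD hDO).symm
    · exact (hnoB ⟨D, hDO, hD⟩).elim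

section Minus

variable (hE : Mm.E = M.E) (hB : ∀ X, Mm.IsBase X ↔ ∃ B e, M.IsBase B ∧ e ∈ B ∧ X = B \ {e})
include hB

lemma indep_iff_indep_and_not_isBase_of_isBase_iff : Mm.Indep X ↔ M.Indep X ∧ ¬ M.IsBase X := by
  constructor
  · intro hX
    obtain ⟨_, hY, hXY⟩ := hX.exists_isBase_superset
    obtain ⟨B, e, hBbase, heB, rfl⟩ := (hB _).1 hY
    have hXB : X ⊆ B := hXY.trans Set.sdiff_subset
    refine ⟨hBbase.indep.subset hXB, fun hXbase ↦ ?_⟩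
    exact (hXY (hXbase.eq_of_subset_isBase hBbase hXB ▸ heB)).2 rfl
  · rintro ⟨hXind, hXnb⟩
    obtain ⟨B, hBbase, hXB⟩ := hXind.exists_isBase_superset
    obtain ⟨e, heB, heX⟩ := Set.exists_of_ssubset (hXB.ssubset_of_ne fun h ↦ hXnb (h ▸ hBbase))
    exact ((hB _).2 ⟨B, e, hBbase, heB, rfl⟩).indep.subset (Set.subset_sdiff_singleton hXB heX)

include hE

lemma dep_iff_dep_or_isBase_of_isBase_iff : Mm.Dep X ↔ M.Dep X ∨ M.IsBase X := by
  rw [dep_iff, dep_iff, indep_iff_indep_and_not_isBase_of_isBase_iff hB, hE, not_and_not_right]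
  constructor
  · rintro ⟨hX, hXE⟩
    by_cases hXB : M.IsBase X
    · exact .inr hXB
    · exact .inl ⟨fun h ↦ hXB (hX h), hXE⟩
  · rintro (⟨hX, hXE⟩ | hXB)
    · exact ⟨fun h ↦ (hX h).elim, hXE⟩
    · exact ⟨fun _ ↦ hXB, hXB.subset_ground⟩

end Minus

end Matroid

open Matroid in
theorem circuits_of_Mminus_general {α : Type*} (M Mm : Matroid α)
    (hE : Mm.E = M.E)
    (hB : ∀ X, Mm.IsBase X ↔ ∃ B e, M.IsBase B ∧ e ∈ B ∧ X = B \ {e}) :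
    ∀ O, Mm.IsCircuit' O ↔
      (M.IsBase O ∨ (M.IsCircuit' O ∧ ¬ ∃ B ⊆ O, M.IsBase B)) := by
  intro O
  have hdep : Mm.Dep = fun X ↦ M.Dep X ∨ M.IsBase X :=
    funext fun _ ↦ propext (dep_iff_dep_or_isBase_of_isBase_iff hE hB)
  rw [isCircuit'_iff_isCircuit, isCircuit'_iff_isCircuit, isCircuit_def, hdep]
  exact minimal_dep_or_isBase_iff

/-- Let `Mm = M⁻` be the matroid whose bases are the sets `B \ {e}` for `B` a base of `M` and
`e ∈ B` (where `∅` is not a base of `M`). Then a set `O` is a circuit of `M⁻` if and only if it is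
a base of `M`, or a circuit of `M` that does not include a base of `M`. -/
theorem circuits_of_Mminus {α : Type*} (M Mm : Matroid α) (hempty : ¬ M.IsBase ∅)
    (hE : Mm.E = M.E)
    (hB : ∀ X, Mm.IsBase X ↔ ∃ B e, M.IsBase B ∧ e ∈ B ∧ X = B \ {e}) :
    ∀ O, Mm.IsCircuit' O ↔
      (M.IsBase O ∨ (M.IsCircuit' O ∧ ¬ ∃ B ⊆ O, M.IsBase B)) :=
  circuits_of_Mminus_general M Mm hE hB
end

section
/- Let M be a matroid whose ground set is not a base, let O₁ be a circuit of M and O₂ a circuit of M/O₁. Then O₁ ∪ O₂ is a circuit of M⁺. -/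
/-!
A set is independent in `M⁺` exactly when it becomes independent in `M` after deleting one
element. Removing any element from `O₁ ∪ O₂` leaves either `O₁` or `O₂ ∪ (O₁ - z)` in place,
and the latter is dependent in `M` since `O₁ - z` is a basis of `O₁` and `O₂` is dependent in
`M / O₁`. Removing one element of `O₁` and one of `O₂` leaves `(O₂ - w) ∪ (O₁ - z)`, which is
independent in `M` for the same reason.
-/

open Set

namespace Matroid

variable {α : Type*} {M : Matroid α} {C D : Set α}

lemma isCircuit'_iff : M.IsCircuit' C ↔ M.IsCircuit C :=
  isCircuit_iff.symm

lemma eq_contract_of_indep_iff {N : Matroid α} (hC : C ⊆ M.E) (hE : N.E = M.E \ C)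
    (hI : ∀ I, N.Indep I ↔ Disjoint I C ∧ ∃ J, M.IsBasis J C ∧ M.Indep (I ∪ J)) :
    N = M ／ C := by
  refine ext_indep hE fun I _ ↦ (hI I).trans ⟨?_, fun hIC ↦ ?_⟩
  · rintro ⟨hdj, J, hJ, hIJ⟩
    exact hJ.contract_indep_iff.2 ⟨hIJ, hdj.symm⟩
  obtain ⟨J, hJ⟩ := M.exists_isBasis C hC
  obtain ⟨hIJ, hdj⟩ := hJ.contract_indep_iff.1 hIC
  exact ⟨hdj.symm, J, hJ, hIJ⟩

lemma indep_iff_exists_indep_sdiff_singleton {Mp : Matroid α} (hEb : ¬ M.IsBase M.E)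
    (hB : ∀ X, Mp.IsBase X ↔ ∃ B e, M.IsBase B ∧ e ∈ M.E \ B ∧ X = insert e B) {X : Set α} :
    Mp.Indep X ↔ ∃ x ∈ M.E, M.Indep (X \ {x}) := by
  refine ⟨fun hX ↦ ?_, fun ⟨x, hx, hXx⟩ ↦ ?_⟩
  · obtain ⟨_, hB', hXB'⟩ := hX.exists_isBase_superset
    obtain ⟨B, e, hB, he, rfl⟩ := (hB _).1 hB'
    exact ⟨e, he.1, hB.indep.subset (sdiff_singleton_subset_iff.2 hXB')⟩
  obtain ⟨B, hB', hXB⟩ := hXx.exists_isBase_superset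
  obtain ⟨e, he, hXe⟩ : ∃ e ∈ M.E \ B, X ⊆ insert e B := by
    by_cases hxB : x ∈ B
    · obtain ⟨e, he⟩ : (M.E \ B).Nonempty :=
        sdiff_nonempty.2 fun hEB ↦ hEb (hEB.antisymm hB'.subset_ground ▸ hB')
      refine ⟨e, he, (sdiff_singleton_subset_iff.1 hXB).trans ?_⟩
      rw [insert_eq_of_mem hxB]
      exact subset_insert e B
    · exact ⟨x, ⟨hx, hxB⟩, sdiff_singleton_subset_iff.1 hXB⟩
  exact ((hB _).2 ⟨B, e, hB', he, rfl⟩).indep.subset hXe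

variable (hC : M.IsCircuit C) (hD : (M ／ C).IsCircuit D)
include hC hD

lemma IsCircuit.not_indep_union_sdiff_singleton (x : α) : ¬ M.Indep ((C ∪ D) \ {x}) := by
  intro hind
  have hCD : Disjoint C D := (subset_sdiff.1 hD.subset_ground).2.symm
  by_cases hxC : x ∈ C
  · have hxD : x ∉ D := hCD.notMem_of_mem_left hxC
    refine hD.not_indep ((hC.sdiff_singleton_isBasis hxC).contract_indep_iff.2
      ⟨hind.subset ?_, hCD⟩)
    rw [union_comm, union_sdiff_distrib]
    exact union_subset_union_right _ (subset_sdiff_singleton subset_rfl hxD)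
  · exact hC.not_indep (hind.subset (subset_sdiff_singleton subset_union_left hxC))

lemma IsCircuit.indep_union_sdiff_pair {e f : α} (he : e ∈ C) (hf : f ∈ D) :
    M.Indep ((C ∪ D) \ {e, f}) := by
  refine ((hC.sdiff_singleton_isBasis he).contract_indep_iff.1
    (hD.sdiff_singleton_indep hf)).1.subset ?_
  rintro x ⟨hxC | hxD, hx⟩ <;> simp only [mem_insert_iff, mem_singleton_iff, not_or] at hx
  · exact Or.inr ⟨hxC, hx.1⟩
  · exact Or.inl ⟨hxD, hx.2⟩

lemma IsCircuit.exists_indep_union_sdiff_sdiff_singleton {e : α} (he : e ∈ C ∪ D) :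
    ∃ f ∈ M.E, M.Indep (((C ∪ D) \ {e}) \ {f}) := by
  simp_rw [sdiff_sdiff, singleton_union]
  rcases he with heC | heD
  · obtain ⟨f, hf⟩ := hD.nonempty
    exact ⟨f, (hD.subset_ground hf).1, hC.indep_union_sdiff_pair hD heC hf⟩
  · obtain ⟨f, hf⟩ := hC.nonempty
    exact ⟨f, hC.subset_ground hf, pair_comm f e ▸ hC.indep_union_sdiff_pair hD hf heD⟩

end Matroid

/-- Let `Mp = M⁺` (bases `B + e` with `B` a base of `M`, `e ∉ B`; the ground set is not a base),
let `O₁` be a circuit of `M` and `O₂` a circuit of the contraction `MC = M/O₁`. Then `O₁ ∪ O₂`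
is a circuit of `M⁺`. -/
theorem union_circuit_of_Mplus {α : Type*} (M Mp MC : Matroid α)
    (hEb : ¬ M.IsBase M.E) (hE : Mp.E = M.E)
    (hB : ∀ X, Mp.IsBase X ↔ ∃ B e, M.IsBase B ∧ e ∈ M.E \ B ∧ X = insert e B)
    (O₁ : Set α) (hO₁ : M.IsCircuit' O₁)
    (hCE : MC.E = M.E \ O₁)
    (hCI : ∀ I, MC.Indep I ↔ Disjoint I O₁ ∧ ∃ J, M.IsBasis J O₁ ∧ M.Indep (I ∪ J))
    (O₂ : Set α) (hO₂ : MC.IsCircuit' O₂) :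
    Mp.IsCircuit' (O₁ ∪ O₂) := by
  obtain rfl : MC = M.contract O₁ := Matroid.eq_contract_of_indep_iff hO₁.1.subset_ground hCE hCI
  rw [Matroid.isCircuit'_iff] at hO₁ hO₂ ⊢
  have hMp (X : Set α) := Matroid.indep_iff_exists_indep_sdiff_singleton hEb hB (X := X)
  refine Matroid.isCircuit_iff_dep_forall_sdiff_singleton_indep.2 ⟨⟨?_, ?_⟩, fun e he ↦ ?_⟩
  · rw [hMp]
    rintro ⟨x, -, hx⟩
    exact hO₁.not_indep_union_sdiff_singleton hO₂ x hx
  · rw [hE]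
    exact union_subset hO₁.subset_ground (hO₂.subset_ground.trans sdiff_subset)
  · exact (hMp _).2 (hO₁.exists_indep_union_sdiff_sdiff_singleton hO₂ he)
end

section
/- For any matroid M whose ground set is not a base, if e ∈ E \ B for some base B of M, then the complement E \ B of a base B of M is a circuit of (M⁺)* ; equivalently, every base of M* is a circuit of (M*)⁻. -/
namespace Matroid

variable {α : Type*} {M : Matroid α} {B B₀ C : Set α} {e : α}

lemma IsCircuit.isCircuit' (hC : M.IsCircuit C) : M.IsCircuit' C :=
  ⟨hC.dep, fun _ hD hDC ↦ hC.eq_of_dep_subset hD hDC⟩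

lemma IsBase.sdiff_inter_insert_nonempty (hB : M.IsBase B) (hB₀ : M.IsBase B₀)
    (he : e ∈ M.E \ B₀) : ((M.E \ B) ∩ insert e B₀).Nonempty := by
  by_contra hdisj
  have hsub : insert e B₀ ⊆ B := fun x hx ↦ by
    by_contra hxB
    exact hdisj ⟨x, ⟨(Set.insert_subset he.1 hB₀.subset_ground) hx, hxB⟩, hx⟩
  have hB₀B : B₀ = B := hB₀.eq_of_subset_isBase hB ((Set.subset_insert e B₀).trans hsub)
  exact he.2 (hB₀B ▸ hsub (Set.mem_insert e B₀))

end Matroid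

theorem compl_base_circuit_of_dual_Mplus_general {α : Type*} (M Mp : Matroid α)
    (hB : ∀ X, Mp.IsBase X ↔ ∃ B e, M.IsBase B ∧ e ∈ M.E \ B ∧ X = insert e B) :
    ∀ B, M.IsBase B → Mp✶.IsCircuit' (M.E \ B) := by
  intro B hBM
  refine Matroid.IsCircuit.isCircuit' (Matroid.isCocircuit_iff_minimal.2 ⟨?_, ?_⟩)
  · intro X hX
    obtain ⟨B₀, e, hB₀, he, rfl⟩ := (hB X).1 hX
    exact hBM.sdiff_inter_insert_nonempty hB₀ he
  · intro X hX hXB x hx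
    obtain ⟨y, hyX, rfl | hyB⟩ := hX _ ((hB _).2 ⟨B, x, hBM, hx, rfl⟩)
    · exact hyX
    · exact absurd hyB (hXB hyX).2

/-- Let `Mp = M⁺` (bases `B + e` with `B` a base of `M`, `e ∈ E \ B`; the ground set is not a
base). Then for every base `B` of `M`, the complement `E \ B` (which is a base of `M✶`) is a
circuit of `(M⁺)✶ = (M✶)⁻`. -/
theorem compl_base_circuit_of_dual_Mplus {α : Type*} (M Mp : Matroid α)
    (hEb : ¬ M.IsBase M.E) (hE : Mp.E = M.E)
    (hB : ∀ X, Mp.IsBase X ↔ ∃ B e, M.IsBase B ∧ e ∈ M.E \ B ∧ X = insert e B) :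
    ∀ B, M.IsBase B → Mp✶.IsCircuit' (M.E \ B) :=
  compl_base_circuit_of_dual_Mplus_general M Mp hB
end

section
/- Suppose (f_e : e ∈ E) is a family of functions A → k, and suppose for each i ≥ 1 there are scalars with λ^i_{p_{i−1}} f_{p_{i−1}}(a) + λ^i_{r_i} f_{r_i}(a) + λ^i_{p_i} f_{p_i}(a) = 0 for all a ∈ A, where all λ^i coefficients are nonzero, and λ^0_{r_0} f_{r_0}(a) + λ^0_{p_0} f_{p_0}(a) = 0 for all a. Define ν_0 = 1, ν_i = −(λ^i_{p_i}/λ^i_{p_{i−1}}) ν_{i−1}, μ_i = −(λ^i_{r_i}/λ^i_{p_i}) ν_i (with μ_0 analogous). Then for all i and all a ∈ A: ν_i f_{p_i}(a) = ∑_{j=0}^{i} μ_j f_{r_j}(a); moreover all ν_i and μ_i are nonzero, and if for a given a only finitely many f_{p_i}(a) are nonzero, then only finitely many f_{r_i}(a) are nonzero and ∑_{i=0}^{∞} μ_i f_{r_i}(a) = 0. -/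
/-!
Multiplying the `i`-th relation by `-ν_{i-1} / λⁱ_{p_{i-1}}` turns it into
`ν_i f_{p_i} = ν_{i-1} f_{p_{i-1}} + μ_i f_{r_i}`, so the partial sums of `μ_j f_{r_j}`
telescope to `ν_i f_{p_i}`. If these vanish from some index on, so does every term
`μ_i f_{r_i}`, being a difference of two consecutive partial sums, and the total sum is one of the
vanishing partial sums.
-/

open Finset Filter Function

theorem sum_range_succ_eq_of_succ_eq_add {M : Type*} [AddCommMonoid M] {u w : ℕ → M}
    (h0 : u 0 = w 0) (hsucc : ∀ n, u (n + 1) = u n + w (n + 1)) (n : ℕ) :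
    u n = ∑ i ∈ range (n + 1), w i := by
  induction n with
  | zero => simpa using h0
  | succ n ih => rw [sum_range_succ, ← ih, hsucc]

theorem support_finite_and_finsum_eq_zero_of_eventually_partialSum_eq_zero {M : Type*}
    [AddCommGroup M] {g : ℕ → M} (h : ∀ᶠ n in atTop, ∑ i ∈ range (n + 1), g i = 0) :
    (support g).Finite ∧ ∑ᶠ i, g i = 0 := by
  obtain ⟨N, hN⟩ := eventually_atTop.1 h
  have hsupp : support g ⊆ range (N + 1) := by
    intro i hi
    by_contra hiN
    simp only [coe_range, Set.mem_Iio, not_lt] at hiN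
    obtain ⟨m, rfl⟩ : ∃ m, i = m + 1 := ⟨i - 1, by omega⟩
    have hm : N ≤ m := by omega
    apply hi
    simpa [sum_range_succ _ (m + 1), hN m hm] using hN (m + 1) (by omega)
  exact ⟨(range (N + 1)).finite_toSet.subset hsupp,
    (finsum_eq_sum_of_support_subset g hsupp).trans (hN N le_rfl)⟩

section Telescoping

variable {A k : Type*} [Field k] {fp fr : ℕ → A → k} {a b c ν μ : ℕ → k}

theorem ne_zero_of_succ_eq_mul (hν0 : ν 0 ≠ 0)
    (hν : ∀ i, ν (i + 1) = -(c (i + 1) / a (i + 1)) * ν i)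
    (hc : ∀ i, c i ≠ 0) (ha : ∀ i, a (i + 1) ≠ 0) (i : ℕ) : ν i ≠ 0 := by
  induction i with
  | zero => exact hν0
  | succ n ih => rw [hν n]; exact mul_ne_zero (neg_ne_zero.2 (div_ne_zero (hc _) (ha _))) ih

theorem mul_fp_zero_eq (hc : ∀ i, c i ≠ 0) (h0 : ∀ x : A, b 0 * fr 0 x + c 0 * fp 0 x = 0)
    (hμ : ∀ i, μ i = -(b i / c i) * ν i) (x : A) :
    ν 0 * fp 0 x = μ 0 * fr 0 x := by
  rw [hμ 0]
  field_simp [hc 0]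
  linear_combination ν 0 * h0 x

theorem mul_fp_succ_eq (hc : ∀ i, c i ≠ 0) (ha : ∀ i, a (i + 1) ≠ 0)
    (hrec : ∀ (i : ℕ) (x : A),
      a (i + 1) * fp i x + b (i + 1) * fr (i + 1) x + c (i + 1) * fp (i + 1) x = 0)
    (hν : ∀ i, ν (i + 1) = -(c (i + 1) / a (i + 1)) * ν i)
    (hμ : ∀ i, μ i = -(b i / c i) * ν i) (i : ℕ) (x : A) :
    ν (i + 1) * fp (i + 1) x = ν i * fp i x + μ (i + 1) * fr (i + 1) x := by
  rw [hμ (i + 1), hν i]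
  field_simp [ha i, hc (i + 1)]
  linear_combination (-ν i) * hrec i x

end Telescoping

/-- The telescoping argument from Theorem 5.5: given families `f_{p i}, f_{r i} : A → k` and
relations `λ⁰_{r₀} f_{r₀}(a) + λ⁰_{p₀} f_{p₀}(a) = 0` and
`λⁱ_{p_{i-1}} f_{p_{i-1}}(a) + λⁱ_{r_i} f_{r_i}(a) + λⁱ_{p_i} f_{p_i}(a) = 0` (all coefficients
nonzero), define `ν₀ = 1`, `ν_i = -(λⁱ_{p_i}/λⁱ_{p_{i-1}}) ν_{i-1}` and
`μ_i = -(λⁱ_{r_i}/λⁱ_{p_i}) ν_i`. Then `ν_i f_{p_i}(a) = ∑_{j ≤ i} μ_j f_{r_j}(a)`, all `ν_i, μ_i`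
are nonzero, and whenever only finitely many `f_{p_i}(a)` are nonzero, only finitely many
`f_{r_i}(a)` are nonzero and `∑_{i} μ_i f_{r_i}(a) = 0`. -/
theorem telescoping_thin_dependence {A k : Type*} [Field k]
    (fp fr : ℕ → A → k)
    (a b c : ℕ → k)
    (hb : ∀ i, b i ≠ 0) (hc : ∀ i, c i ≠ 0) (ha : ∀ i, a (i + 1) ≠ 0)
    (h0 : ∀ x : A, b 0 * fr 0 x + c 0 * fp 0 x = 0)
    (hrec : ∀ (i : ℕ) (x : A),
      a (i + 1) * fp i x + b (i + 1) * fr (i + 1) x + c (i + 1) * fp (i + 1) x = 0)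
    (ν μ : ℕ → k)
    (hν0 : ν 0 = 1)
    (hν : ∀ i, ν (i + 1) = -(c (i + 1) / a (i + 1)) * ν i)
    (hμ : ∀ i, μ i = -(b i / c i) * ν i) :
    (∀ (i : ℕ) (x : A), ν i * fp i x = ∑ j ∈ Finset.range (i + 1), μ j * fr j x) ∧
    (∀ i, ν i ≠ 0 ∧ μ i ≠ 0) ∧
    (∀ x : A, {i : ℕ | fp i x ≠ 0}.Finite →
      {i : ℕ | fr i x ≠ 0}.Finite ∧ ∑ᶠ i : ℕ, μ i * fr i x = 0) := by
  have hνne : ∀ i, ν i ≠ 0 := ne_zero_of_succ_eq_mul (hν0 ▸ one_ne_zero) hν hc ha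
  have hμne : ∀ i, μ i ≠ 0 := fun i => by
    rw [hμ i]
    exact mul_ne_zero (neg_ne_zero.2 (div_ne_zero (hb i) (hc i))) (hνne i)
  have htele : ∀ (i : ℕ) (x : A), ν i * fp i x = ∑ j ∈ range (i + 1), μ j * fr j x :=
    fun i x => sum_range_succ_eq_of_succ_eq_add (u := fun i => ν i * fp i x)
      (w := fun j => μ j * fr j x) (mul_fp_zero_eq hc h0 hμ x)
      (fun n => mul_fp_succ_eq hc ha hrec hν hμ n x) i
  refine ⟨htele, fun i => ⟨hνne i, hμne i⟩, fun x hfin => ?_⟩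
  have hpartial : ∀ᶠ n in atTop, ∑ j ∈ range (n + 1), μ j * fr j x = 0 := by
    rw [← Nat.cofinite_eq_atTop]
    filter_upwards [eventually_cofinite.2 (by simpa using hfin)] with n hn
    rw [← htele, hn, mul_zero]
  obtain ⟨hsupp, hsum⟩ :=
    support_finite_and_finsum_eq_zero_of_eventually_partialSum_eq_zero hpartial
  have hsupp_eq : support (fun i => μ i * fr i x) = {i | fr i x ≠ 0} := by
    ext i
    simp [hμne i]
  exact ⟨hsupp_eq ▸ hsupp, hsum⟩
end
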